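/- Let 1 < λ < λ*, where λ* = (√2+1)·e^{√2}, and let a be the unique fixed point of ζ_λ in (0, √2) (equivalently, a ∈ (0, √2) with (a+1)·e^a = λ). Then for every x ∈ (−∞, −1) ∪ (0, ∞), the iterates satisfy ζ_λ^n(x) → a as n → ∞. -/

import Mathlib

/-!
Let `φ t = t + log (t + 1)`. For `0 < λ < λ*` the map `t ↦ φ (ζ t) + φ t` is strictly
increasing on `(0, ∞)`: up to a positive factor its derivative is a quadratic in `E = λ e^{-t}`,
concave once `t² + t > 1`, and `E` stays below `(√2 + 1) / (t + 1 - √2)` (from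
`e^{√2 - t} ≤ 1 / (t + 1 - √2)`), a point where the quadratic is still nonnegative, with
tangency at `t = √2`. Since `ζ t - t` has the sign of `a - t`, this monotonicity puts `φ (ζ t)`
strictly between `φ t` and `2 φ a - φ t`, so `|φ - φ a|` strictly decreases along orbits in
`(0, ∞)`. Those orbits stay in a compact subinterval of `(0, ∞)`, where a LaSalle-type argument
forces convergence to `a`; points `x < -1` are mapped into `(0, ∞)` in one step.
-/

open Filter Topology Set Function Real

/-- The real function `ζ_λ(x) = λ·x·e^{−x}/(x+1)`. -/
noncomputable def zeta (lam x : ℝ) : ℝ := lam * x * Real.exp (-x) / (x + 1)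

theorem tendsto_iterate_of_lyapunov {α : Type*} [TopologicalSpace α] [T2Space α]
    [FirstCountableTopology α] {f : α → α} {V : α → ℝ} {K : Set α} {a x : α}
    (hK : IsCompact K) (hf : ContinuousOn f K) (hV : ContinuousOn V K) (hfa : f a = a)
    (hdec : ∀ z ∈ K, z ≠ a → V (f z) < V z) (horb : ∀ n, f^[n] x ∈ K) :
    Tendsto (fun n => f^[n] x) atTop (𝓝 a) := by
  have hsucc : ∀ n, f^[n + 1] x = f (f^[n] x) := fun n => iterate_succ_apply' f n x
  have hanti : Antitone fun n => V (f^[n] x) := antitone_nat_of_succ_le fun n => by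
    rw [hsucc]
    by_cases h : f^[n] x = a
    · rw [h, hfa]
    · exact (hdec _ (horb n) h).le
  have hbdd : BddBelow (range fun n => V (f^[n] x)) :=
    (hK.bddBelow_image hV).mono (range_subset_iff.2 fun n => mem_image_of_mem V (horb n))
  obtain ⟨I, hI⟩ : ∃ I, Tendsto (fun n => V (f^[n] x)) atTop (𝓝 I) :=
    ⟨_, tendsto_atTop_ciInf hanti hbdd⟩
  refine tendsto_of_subseq_tendsto fun ns hns => ?_
  obtain ⟨y, hyK, ψ, hψ, hy⟩ := hK.tendsto_subseq fun k => horb (ns k)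
  have hns' : Tendsto (ns ∘ ψ) atTop atTop := hns.comp hψ.tendsto_atTop
  have hVy : V y = I := tendsto_nhds_unique
    ((hV y hyK).tendsto.comp (tendsto_nhdsWithin_iff.2 ⟨hy, .of_forall fun k => horb _⟩))
    (hI.comp hns')
  have hfy : Tendsto (fun k => f^[ns (ψ k) + 1] x) atTop (𝓝 (f y)) := by
    simp only [hsucc]
    exact (hf y hyK).tendsto.comp (tendsto_nhdsWithin_iff.2 ⟨hy, .of_forall fun k => horb _⟩)
  have hfyK : f y ∈ K := hK.isClosed.mem_of_tendsto hfy (.of_forall fun k => horb _)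
  have hVfy : V (f y) = I := tendsto_nhds_unique
    ((hV _ hfyK).tendsto.comp (tendsto_nhdsWithin_iff.2 ⟨hfy, .of_forall fun k => horb _⟩))
    (hI.comp ((tendsto_add_atTop_nat 1).comp hns'))
  obtain rfl : y = a := by
    by_contra hya
    exact (hdec y hyK hya).ne (hVfy.trans hVy.symm)
  exact ⟨ψ, hy⟩

lemma strictMonoOn_add_one_mul_exp : StrictMonoOn (fun t => (t + 1) * exp t) (Ici 0) :=
  fun s hs t _ hst => mul_lt_mul'' (by linarith) (exp_lt_exp.2 hst) (by linarith [mem_Ici.1 hs])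
    (exp_pos s).le

lemma concave_quadratic_pos {A B C E E₀ : ℝ} (hA : A ≤ 0) (hC : 0 < C)
    (hE₀ : 0 ≤ A * E₀ ^ 2 + B * E₀ + C) (hE : 0 ≤ E) (hEE₀ : E < E₀) :
    0 < A * E ^ 2 + B * E + C := by
  have key : E₀ * (A * E ^ 2 + B * E + C) =
      (E₀ - E) * C + E * (A * E₀ ^ 2 + B * E₀ + C) + (-A) * E₀ * E * (E₀ - E) := by ring
  have hE₀pos : 0 < E₀ := hE.trans_lt hEE₀
  have : 0 < E₀ * (A * E ^ 2 + B * E + C) := by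
    rw [key]
    have : 0 < E₀ - E := sub_pos.2 hEE₀
    have : 0 ≤ -A := neg_nonneg.2 hA
    positivity
  exact pos_of_mul_pos_right this hE₀pos.le

lemma add_one_mul_exp_neg_le_one (t : ℝ) : (t + 1) * exp (-t) ≤ 1 := by
  calc (t + 1) * exp (-t) ≤ exp t * exp (-t) := by gcongr; exact add_one_le_exp t
    _ = 1 := by rw [← exp_add, add_neg_cancel, exp_zero]

/-- `(x + 1 - √2)²` times the quadratic of `quadratic_pos_of_lt_mul_exp` at
`E = (√2 + 1) / (x + 1 - √2)`; its double zero at `x = √2` is what makes `λ*` the threshold. -/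
lemma tangent_poly_nonneg {x : ℝ} (hx : 0 < x + 1 - √2) :
    0 ≤ x * (1 - x - x ^ 2) * (√2 + 1) ^ 2
      + (x + 1) * (2 - x ^ 2) * (√2 + 1) * (x + 1 - √2)
      + (x + 2) * (x + 1) ^ 2 * (x + 1 - √2) ^ 2 := by
  have hs : √2 ^ 2 = 2 := sq_sqrt (by norm_num)
  have hid : x * (1 - x - x ^ 2) * (√2 + 1) ^ 2
      + (x + 1) * (2 - x ^ 2) * (√2 + 1) * (x + 1 - √2)
      + (x + 2) * (x + 1) ^ 2 * (x + 1 - √2) ^ 2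
      = (x - √2) ^ 2 * (1 + (x + 1 - √2) * (x ^ 2 + 4 * x + 3 + √2)) := by
    linear_combination
      (√2 ^ 2 + x * √2 + 2 * √2 + x ^ 2 * √2 - 7 * x - 2 * x ^ 3 - 6 * x ^ 2 - 2) * hs
  rw [hid]
  have : 0 < x ^ 2 + 4 * x + 3 + √2 := by nlinarith [sqrt_nonneg 2]
  positivity

lemma quadratic_pos_of_lt_mul_exp {x E : ℝ} (hx : 0 < x) (hE : 0 ≤ E)
    (hEx : E < (√2 + 1) * exp (√2 - x)) :
    0 < x * (1 - x - x ^ 2) * E ^ 2 + (x + 1) * (2 - x ^ 2) * E + (x + 2) * (x + 1) ^ 2 := by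
  have hs : √2 ^ 2 = 2 := sq_sqrt (by norm_num)
  have hs1 : 1 < √2 := by rw [lt_sqrt zero_le_one]; norm_num
  have hs32 : √2 < 3 / 2 := by rw [sqrt_lt' (by norm_num)]; norm_num
  rcases le_or_gt (x ^ 2 + x) 1 with hsmall | hlarge
  · have : 0 ≤ x * (1 - x - x ^ 2) := mul_nonneg hx.le (by linarith)
    have : 0 ≤ (x + 1) * (2 - x ^ 2) := mul_nonneg (by linarith) (by nlinarith)
    positivity
  · have hd : 0 < x + 1 - √2 := by nlinarith
    refine concave_quadratic_pos (E₀ := (√2 + 1) / (x + 1 - √2)) (by nlinarith)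
      (by positivity) ?_ hE ?_
    · refine (div_nonneg (tangent_poly_nonneg hd) (sq_nonneg (x + 1 - √2))).trans_eq ?_
      have := hd.ne'
      field_simp
    · rw [lt_div_iff₀ hd]
      calc E * (x + 1 - √2) < (√2 + 1) * exp (√2 - x) * (x + 1 - √2) := by gcongr
        _ = (√2 + 1) * ((x - √2 + 1) * exp (-(x - √2))) := by ring_nf
        _ ≤ (√2 + 1) * 1 := by gcongr; exact add_one_mul_exp_neg_le_one _
        _ = √2 + 1 := mul_one _

noncomputable def phi (t : ℝ) : ℝ := t + log (t + 1)

lemma hasDerivAt_phi {t : ℝ} (ht : -1 < t) : HasDerivAt phi (1 + 1 / (t + 1)) t :=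
  (hasDerivAt_id' t).add (((hasDerivAt_id' t).add_const 1).log (by linarith))

lemma continuousOn_phi : ContinuousOn phi (Ioi (-1)) :=
  fun _ ht => (hasDerivAt_phi ht).continuousAt.continuousWithinAt

lemma phi_lt_phi {s t : ℝ} (hs : -1 < s) (hst : s < t) : phi s < phi t :=
  add_lt_add hst (log_lt_log (by linarith) (by linarith))

lemma self_le_phi {t : ℝ} (ht : 0 ≤ t) : t ≤ phi t :=
  le_add_of_nonneg_right (log_nonneg (by linarith))

section Zeta

variable {lam a x : ℝ}

lemma zeta_eq_mul (lam x : ℝ) : zeta lam x = x * (lam / ((x + 1) * exp x)) := by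
  rw [zeta, exp_neg]
  simp only [div_eq_mul_inv, mul_inv]
  ring

lemma zeta_pos_of_pos (hlam : 0 < lam) (hx : 0 < x) : 0 < zeta lam x := by
  rw [zeta_eq_mul]
  positivity

lemma zeta_pos_of_lt_neg_one (hlam : 0 < lam) (hx : x < -1) : 0 < zeta lam x := by
  rw [zeta_eq_mul]
  have : (x + 1) * exp x < 0 := mul_neg_of_neg_of_pos (by linarith) (exp_pos x)
  exact mul_pos_of_neg_of_neg (by linarith) (div_neg_of_pos_of_neg hlam this)

lemma mapsTo_zeta_Ioi (hlam : 0 < lam) : MapsTo (zeta lam) (Ioi 0) (Ioi 0) :=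
  fun _ hx => zeta_pos_of_pos hlam hx

lemma eq_add_one_mul_exp_of_zeta_eq (ha : 0 < a) (hfix : zeta lam a = a) :
    lam = (a + 1) * exp a := by
  rw [zeta_eq_mul, mul_eq_left₀ ha.ne', div_eq_one_iff_eq (by positivity)] at hfix
  exact hfix

lemma zeta_lt_self_iff (ha : 0 < a) (hfix : zeta lam a = a) (hx : 0 < x) :
    zeta lam x < x ↔ a < x := by
  rw [zeta_eq_mul, mul_lt_iff_lt_one_right hx, div_lt_one (by positivity),
    eq_add_one_mul_exp_of_zeta_eq ha hfix]
  exact strictMonoOn_add_one_mul_exp.lt_iff_lt ha.le hx.le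

lemma self_lt_zeta_iff (ha : 0 < a) (hfix : zeta lam a = a) (hx : 0 < x) :
    x < zeta lam x ↔ x < a := by
  rw [zeta_eq_mul, lt_mul_iff_one_lt_right hx, one_lt_div (by positivity),
    eq_add_one_mul_exp_of_zeta_eq ha hfix]
  exact strictMonoOn_add_one_mul_exp.lt_iff_lt hx.le ha.le

lemma self_le_zeta_iff (ha : 0 < a) (hfix : zeta lam a = a) (hx : 0 < x) :
    x ≤ zeta lam x ↔ x ≤ a := by
  simpa only [not_lt] using (zeta_lt_self_iff ha hfix hx).not

lemma hasDerivAt_zeta (hx : x ≠ -1) :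
    HasDerivAt (zeta lam) (lam * exp (-x) * (1 - x - x ^ 2) / (x + 1) ^ 2) x := by
  have hx1 : x + 1 ≠ 0 := fun h => hx (by linarith)
  have h := (((hasDerivAt_id' x).const_mul lam).fun_mul (hasDerivAt_neg x).exp).fun_div
    ((hasDerivAt_id' x).add_const 1) hx1
  exact h.congr_deriv (by ring)

lemma continuousOn_zeta : ContinuousOn (zeta lam) (Ioi 0) :=
  fun _ hx => (hasDerivAt_zeta (by linarith [mem_Ioi.1 hx])).continuousAt.continuousWithinAt

lemma min_le_zeta (hlam : 0 < lam) (ha : 0 < a) (hfix : zeta lam a = a) {U : ℝ} (hx : 0 < x)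
    (hxU : x ≤ U) : min x (lam * a * exp (-U) / (U + 1)) ≤ zeta lam x := by
  rcases le_or_gt x a with hxa | hax
  · exact (min_le_left _ _).trans ((self_le_zeta_iff ha hfix hx).2 hxa)
  · refine (min_le_right _ _).trans ?_
    rw [zeta]
    gcongr

lemma deriv_phi_zeta_add_phi_pos (hlam : 0 < lam)
    (hlam_lt : lam < (√2 + 1) * exp √2) (hx : 0 < x) :
    0 < (1 + 1 / (zeta lam x + 1)) * (lam * exp (-x) * (1 - x - x ^ 2) / (x + 1) ^ 2)
      + (1 + 1 / (x + 1)) := by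
  have hx1 : x + 1 ≠ 0 := by positivity
  have hEx : lam * exp (-x) < (√2 + 1) * exp (√2 - x) := by
    rw [sub_eq_add_neg, exp_add, ← mul_assoc]
    exact mul_lt_mul_of_pos_right hlam_lt (exp_pos _)
  have hz : zeta lam x + 1 = (x * (lam * exp (-x)) + x + 1) / (x + 1) := by
    rw [zeta]
    field_simp
    ring
  have hE : 0 < lam * exp (-x) := by positivity
  rw [hz]
  generalize lam * exp (-x) = E at hE hEx ⊢
  have hden : x * E + x + 1 ≠ 0 := by positivity
  have key : (1 + 1 / ((x * E + x + 1) / (x + 1))) * (E * (1 - x - x ^ 2) / (x + 1) ^ 2)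
      + (1 + 1 / (x + 1))
      = (x * (1 - x - x ^ 2) * E ^ 2 + (x + 1) * (2 - x ^ 2) * E + (x + 2) * (x + 1) ^ 2)
        / ((x + 1) ^ 2 * (x * E + x + 1)) := by
    rw [eq_div_iff (by positivity)]
    field_simp
    ring
  rw [key]
  exact div_pos (quadratic_pos_of_lt_mul_exp hx hE.le hEx) (by positivity)

lemma strictMonoOn_phi_zeta_add_phi (hlam : 0 < lam) (hlam_lt : lam < (√2 + 1) * exp √2) :
    StrictMonoOn (fun t => phi (zeta lam t) + phi t) (Ioi 0) := by
  have hderiv : ∀ t ∈ Ioi (0 : ℝ), HasDerivAt (fun t => phi (zeta lam t) + phi t)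
      ((1 + 1 / (zeta lam t + 1)) * (lam * exp (-t) * (1 - t - t ^ 2) / (t + 1) ^ 2)
        + (1 + 1 / (t + 1))) t := fun t ht =>
    ((hasDerivAt_phi (by linarith [zeta_pos_of_pos hlam ht])).comp t
      (hasDerivAt_zeta (by linarith [mem_Ioi.1 ht]))).add
        (hasDerivAt_phi (by linarith [mem_Ioi.1 ht]))
  refine strictMonoOn_of_deriv_pos (convex_Ioi 0)
    (fun t ht => (hderiv t ht).continuousAt.continuousWithinAt) fun t ht => ?_
  rw [interior_Ioi] at ht
  rw [(hderiv t ht).deriv]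
  exact deriv_phi_zeta_add_phi_pos hlam hlam_lt ht

lemma abs_phi_zeta_sub_lt (hlam : 0 < lam) (hlam_lt : lam < (√2 + 1) * exp √2) (ha : 0 < a)
    (hfix : zeta lam a = a) (hx : 0 < x) (hxa : x ≠ a) :
    |phi (zeta lam x) - phi a| < |phi x - phi a| := by
  have hmono := strictMonoOn_phi_zeta_add_phi hlam hlam_lt
  have hζx : (0 : ℝ) < zeta lam x := zeta_pos_of_pos hlam hx
  rcases hxa.lt_or_gt with hlt | hgt
  · have hsum := hmono hx ha hlt
    have hstep := phi_lt_phi (by linarith) ((self_lt_zeta_iff ha hfix hx).2 hlt)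
    have hxa' := phi_lt_phi (by linarith) hlt
    simp only [hfix] at hsum
    rw [abs_of_neg (sub_neg.2 hxa'), abs_lt]
    constructor <;> linarith
  · have hsum := hmono ha hx hgt
    have hstep := phi_lt_phi (by linarith) ((zeta_lt_self_iff ha hfix hx).2 hgt)
    have hax' := phi_lt_phi (by linarith) hgt
    simp only [hfix] at hsum
    rw [abs_of_pos (sub_pos.2 hax'), abs_lt]
    constructor <;> linarith

lemma iterate_zeta_mem_Icc (hlam : 0 < lam) (hlam_lt : lam < (√2 + 1) * exp √2) (ha : 0 < a)
    (hfix : zeta lam a = a) (hx : 0 < x) :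
    ∃ L U, 0 < L ∧ ∀ n, (zeta lam)^[n] x ∈ Icc L U := by
  have hpos : ∀ n, 0 < (zeta lam)^[n] x := fun n => (mapsTo_zeta_Ioi hlam).iterate n hx
  have hanti : Antitone fun n => |phi ((zeta lam)^[n] x) - phi a| :=
    antitone_nat_of_succ_le fun n => by
      rw [iterate_succ_apply']
      rcases eq_or_ne ((zeta lam)^[n] x) a with h | h
      · rw [h, hfix]
      · exact (abs_phi_zeta_sub_lt hlam hlam_lt ha hfix (hpos n) h).le
  set U := phi a + |phi x - phi a|
  have hU : ∀ n, (zeta lam)^[n] x ≤ U := fun n =>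
    calc (zeta lam)^[n] x ≤ phi ((zeta lam)^[n] x) := self_le_phi (hpos n).le
      _ ≤ phi a + |phi ((zeta lam)^[n] x) - phi a| := by
        linarith [le_abs_self (phi ((zeta lam)^[n] x) - phi a)]
      _ ≤ U := add_le_add_right (hanti n.zero_le) _
  set L := min x (lam * a * exp (-U) / (U + 1))
  have hL : ∀ n, L ≤ (zeta lam)^[n] x := by
    intro n
    induction n with
    | zero => exact min_le_left _ _
    | succ n ih =>
      rw [iterate_succ_apply']
      exact (le_min ih (min_le_right _ _)).trans (min_le_zeta hlam ha hfix (hpos n) (hU n))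
  have hU0 : 0 < U := hx.trans_le (hU 0)
  exact ⟨L, U, lt_min hx (div_pos (by positivity) (by linarith)), fun n => ⟨hL n, hU n⟩⟩

theorem tendsto_iterate_zeta_of_pos (hlam : 0 < lam) (hlam_lt : lam < (√2 + 1) * exp √2)
    (ha : 0 < a) (hfix : zeta lam a = a) (hx : 0 < x) :
    Tendsto (fun n => (zeta lam)^[n] x) atTop (𝓝 a) := by
  obtain ⟨L, U, hL, horb⟩ := iterate_zeta_mem_Icc hlam hlam_lt ha hfix hx
  have hK : Icc L U ⊆ Ioi 0 := fun z hz => hL.trans_le hz.1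
  have hV : ContinuousOn (fun z => |phi z - phi a|) (Ioi 0) :=
    ((continuousOn_phi.mono (Ioi_subset_Ioi (by norm_num))).sub continuousOn_const).abs
  exact tendsto_iterate_of_lyapunov isCompact_Icc (continuousOn_zeta.mono hK) (hV.mono hK) hfix
    (fun z hz hza => abs_phi_zeta_sub_lt hlam hlam_lt ha hfix (hK hz) hza) horb

end Zeta

theorem iterates_tendsto_attracting_fixed_point (lam : ℝ) (hlam0 : 1 < lam)
    (hlam1 : lam < (Real.sqrt 2 + 1) * Real.exp (Real.sqrt 2))
    (a : ℝ) (ha : a ∈ Set.Ioo (0 : ℝ) (Real.sqrt 2)) (hfix : zeta lam a = a) :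
    ∀ x : ℝ, x < -1 ∨ 0 < x →
      Tendsto (fun n : ℕ => (zeta lam)^[n] x) atTop (nhds a) := by
  intro x hx
  have hlam : 0 < lam := by linarith
  have hζx : 0 < zeta lam x := hx.elim (zeta_pos_of_lt_neg_one hlam) (zeta_pos_of_pos hlam)
  rw [← tendsto_add_atTop_iff_nat 1]
  simpa only [iterate_succ_apply] using tendsto_iterate_zeta_of_pos hlam hlam1 ha.1 hfix hζx
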